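/- Let γ be a gauge on a real vector space X and let m ≤ n be natural numbers with dim X > n. If every n-dimensional linear subspace of X is coproximinal, then every m-dimensional linear subspace of X is coproximinal. -/

import Mathlib

/-- A gauge on a real vector space: nonnegative, vanishing exactly at `0`,
positively homogeneous, and subadditive. -/
def IsGauge {X : Type*} [AddCommGroup X] [Module ℝ X] (γ : X → ℝ) : Prop :=
  (∀ x, 0 ≤ γ x) ∧ (∀ x, γ x = 0 ↔ x = 0) ∧
    (∀ (l : ℝ) (x : X), 0 < l → γ (l • x) = l * γ x) ∧
    (∀ x y, γ (x + y) ≤ γ x + γ y)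

/-- `K` is coproximinal: every point of the space has a best coapproximation in `K`. -/
def Coproximinal {X : Type*} [AddCommGroup X] (γ : X → ℝ) (K : Set X) : Prop :=
  ∀ y : X, ∃ x ∈ K, ∀ z ∈ K, γ (x - z) ≤ γ (y - z)

/-!
Going down one dimension at a time, it suffices to show that `K` is coproximinal once all
subspaces of dimension `dim K + 1` are. Given `y ∉ K`, pick `v ∉ K + ℝ y` and, for
`t ∈ [-1, 1]`, let `L_t = K + ℝ (t y + (1 - t²) v)`. For `|t| < 1` this subspace has dimension
`dim K + 1`, so `y` has a best coapproximation `k + s (t y + (1 - t²) v)` in it; at `t = ±1`,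
`y` itself works, with `s = ±1`. In coordinates these coapproximants form a compact set, so by
connectedness of `[-1, 1]` some `L_t` carries best coapproximations of `y` with `s ≥ 0` and with
`s ≤ 0`. They form a convex set, hence one of them has `s = 0`: it lies in `K ⊆ L_t`, so it is a
best coapproximation of `y` in `K`.
-/

open Set Function Module

def IsBestCoapprox {X : Type*} [AddCommGroup X] (γ : X → ℝ) (K : Set X) (y x : X) : Prop :=
  x ∈ K ∧ ∀ z ∈ K, γ (x - z) ≤ γ (y - z)

section BestCoapprox

variable {E X : Type*} [AddCommGroup E] [AddCommGroup X] {γ : X → ℝ} {K K' : Set X} {y x : X}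

theorem isBestCoapprox_self (hy : y ∈ K) : IsBestCoapprox γ K y y :=
  ⟨hy, fun _ _ => le_rfl⟩

theorem IsBestCoapprox.mono (h : IsBestCoapprox γ K y x) (hK' : K' ⊆ K) (hx : x ∈ K') :
    IsBestCoapprox γ K' y x :=
  ⟨hx, fun z hz => h.2 z (hK' hz)⟩

theorem IsBestCoapprox.le_of_zero_mem (h : IsBestCoapprox γ K y x) (h0 : (0 : X) ∈ K) :
    γ x ≤ γ y := by
  simpa using h.2 0 h0

theorem isBestCoapprox_image_iff {F : Type*} [FunLike F E X] [AddMonoidHomClass F E X] {T : F}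
    (hT : Injective T) {K : Set E} {y x : E} :
    IsBestCoapprox γ (T '' K) (T y) (T x) ↔ IsBestCoapprox (γ ∘ T) K y x := by
  simp [IsBestCoapprox, hT.mem_set_image, ← map_sub]

theorem convex_setOf_isBestCoapprox [Module ℝ X] (hγ : ConvexOn ℝ univ γ) (hK : Convex ℝ K) :
    Convex ℝ {x | IsBestCoapprox γ K y x} := by
  rintro x₁ ⟨hx₁, h₁⟩ x₂ ⟨hx₂, h₂⟩ a b ha hb hab
  refine ⟨hK hx₁ hx₂ ha hb hab, fun z hz => ?_⟩
  calc γ (a • x₁ + b • x₂ - z) = γ (a • (x₁ - z) + b • (x₂ - z)) := by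
        congr 1
        linear_combination (norm := module) hab • z
    _ ≤ a * γ (x₁ - z) + b * γ (x₂ - z) := hγ.2 trivial trivial ha hb hab
    _ ≤ a * γ (y - z) + b * γ (y - z) := by gcongr <;> [exact h₁ z hz; exact h₂ z hz]
    _ = γ (y - z) := by rw [← add_mul, hab, one_mul]

end BestCoapprox

namespace IsGauge

section Module

variable {E X : Type*} [AddCommGroup E] [Module ℝ E] [AddCommGroup X] [Module ℝ X] {γ : X → ℝ}

theorem map_zero (hγ : IsGauge γ) : γ 0 = 0 :=
  (hγ.2.1 0).2 rfl

theorem convexOn (hγ : IsGauge γ) : ConvexOn ℝ univ γ := by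
  refine ⟨convex_univ, fun x _ y _ a b ha hb _ => ?_⟩
  have smul_le : ∀ (c : ℝ) (w : X), 0 ≤ c → γ (c • w) ≤ c * γ w := by
    intro c w hc
    rcases hc.eq_or_lt with rfl | hc
    · simp [hγ.map_zero]
    · exact (hγ.2.2.1 c w hc).le
  calc γ (a • x + b • y) ≤ γ (a • x) + γ (b • y) := hγ.2.2.2 _ _
    _ ≤ a • γ x + b • γ y := add_le_add (smul_le a x ha) (smul_le b y hb)

theorem comp_linearMap (hγ : IsGauge γ) {T : E →ₗ[ℝ] X} (hT : Injective T) : IsGauge (γ ∘ T) := by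
  obtain ⟨nonneg, eq_zero, smul, add⟩ := hγ
  refine ⟨fun x => nonneg _, fun x => ?_, fun l x hl => ?_, fun x y => ?_⟩
  · simpa using (eq_zero (T x)).trans (map_eq_zero_iff T hT)
  · simpa using smul l (T x) hl
  · simpa using add (T x) (T y)

end Module

section Normed

variable {E : Type*} [NormedAddCommGroup E] [NormedSpace ℝ E] [FiniteDimensional ℝ E] {γ : E → ℝ}

theorem continuous (hγ : IsGauge γ) : Continuous γ :=
  continuousOn_univ.1 (hγ.convexOn.continuousOn isOpen_univ)

theorem exists_pos_mul_norm_le [Nontrivial E] (hγ : IsGauge γ) :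
    ∃ δ > 0, ∀ x, δ * ‖x‖ ≤ γ x := by
  obtain ⟨x₀, hx₀, hmin⟩ := (isCompact_sphere (0 : E) 1).exists_isMinOn
    (NormedSpace.sphere_nonempty.2 zero_le_one) hγ.continuous.continuousOn
  have hx₀ : x₀ ≠ 0 := ne_zero_of_mem_unit_sphere ⟨x₀, hx₀⟩
  refine ⟨γ x₀, (hγ.1 x₀).lt_of_ne' (mt (hγ.2.1 x₀).1 hx₀), fun x => ?_⟩
  rcases eq_or_ne x 0 with rfl | hx
  · simp [hγ.map_zero]
  have hx' : 0 < ‖x‖ := norm_pos_iff.2 hx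
  calc γ x₀ * ‖x‖ ≤ γ (‖x‖⁻¹ • x) * ‖x‖ := by
        gcongr
        exact hmin (by simp [norm_smul, hx'.ne'])
    _ = γ x := by
        rw [hγ.2.2.1 _ _ (inv_pos.2 hx'), mul_comm, ← mul_assoc, mul_inv_cancel₀ hx'.ne', one_mul]

end Normed

end IsGauge

theorem IsPreconnected.exists_fiber_nonneg_nonpos {T Y : Type*} [TopologicalSpace T] [T2Space T]
    [TopologicalSpace Y] {C : Set (T × Y)} (hC : IsCompact C) {f : Y → ℝ} (hf : Continuous f)
    {s : Set T} (hs : IsPreconnected s) (hcover : s ⊆ Prod.fst '' C) {a b : T} (ha : a ∈ s)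
    (hb : b ∈ s) (ha' : ∃ y, (a, y) ∈ C ∧ 0 ≤ f y) (hb' : ∃ y, (b, y) ∈ C ∧ f y ≤ 0) :
    ∃ t ∈ s, ∃ y₁ y₂, (t, y₁) ∈ C ∧ (t, y₂) ∈ C ∧ 0 ≤ f y₁ ∧ f y₂ ≤ 0 := by
  set Cpos := C ∩ {p | 0 ≤ f p.2}
  set Cneg := C ∩ {p | f p.2 ≤ 0}
  have closed_fst_image : ∀ D : Set (T × Y), IsClosed D → IsClosed (Prod.fst '' (C ∩ D)) :=
    fun D hD => ((hC.inter_right hD).image continuous_fst).isClosed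
  have hcover' : s ⊆ Prod.fst '' Cpos ∪ Prod.fst '' Cneg := by
    intro t ht
    obtain ⟨⟨t, y⟩, hy, rfl⟩ := hcover ht
    rcases le_total 0 (f y) with h | h
    · exact Or.inl ⟨(t, y), ⟨hy, h⟩, rfl⟩
    · exact Or.inr ⟨(t, y), ⟨hy, h⟩, rfl⟩
  obtain ⟨ya, hya, hfa⟩ := ha'
  obtain ⟨yb, hyb, hfb⟩ := hb'
  obtain ⟨t, hts, ⟨⟨t₁, y₁⟩, ⟨hy₁, hf₁⟩, rfl⟩, ⟨⟨t₂, y₂⟩, ⟨hy₂, hf₂⟩, h₂⟩⟩ :=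
    isPreconnected_closed_iff.1 hs _ _
      (closed_fst_image _ (isClosed_le continuous_const (hf.comp continuous_snd)))
      (closed_fst_image _ (isClosed_le (hf.comp continuous_snd) continuous_const)) hcover'
      ⟨a, ha, (a, ya), ⟨hya, hfa⟩, rfl⟩ ⟨b, hb, (b, yb), ⟨hyb, hfb⟩, rfl⟩
  obtain rfl : t₂ = t₁ := h₂
  exact ⟨t₂, hts, y₁, y₂, hy₁, hy₂, hf₁, hf₂⟩

theorem LinearMap.injective_coprod_toSpanSingleton {K M X : Type*} [DivisionRing K]
    [AddCommGroup M] [Module K M] [AddCommGroup X] [Module K X] {f : M →ₗ[K] X}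
    (hf : Injective f) {v : X} (hv : v ∉ range f) :
    Injective (f.coprod (toSpanSingleton K X v)) := by
  have hv0 : v ≠ 0 := fun h => hv (h ▸ zero_mem _)
  rw [← ker_eq_bot, ker_coprod_of_disjoint_range, ker_eq_bot.2 hf, ker_toSpanSingleton K hv0,
    Submodule.prod_bot]
  rwa [LinearMap.range_toSpanSingleton, Submodule.disjoint_span_singleton' hv0]

section ArcEmbed

variable {V : Type*} [NormedAddCommGroup V] [NormedSpace ℝ V]

theorem half_le_norm_parabola (t : ℝ) : 1 / 2 ≤ ‖((t, 1 - t ^ 2) : ℝ × ℝ)‖ := by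
  rw [Prod.norm_def, Real.norm_eq_abs, Real.norm_eq_abs]
  rcases le_or_gt (1 / 2) |t| with ht | ht
  · exact ht.trans (le_max_left _ _)
  · refine le_max_of_le_right (le_abs.2 (Or.inl ?_))
    nlinarith [abs_nonneg t, sq_abs t]

variable (V) in
/-- In coordinates `V × ℝ × ℝ` for `K ⊕ ℝ y ⊕ ℝ v`, the range of `arcEmbed V t` is `L_t` and
`(0, 1, 0)` is `y`. -/
def arcEmbed (t : ℝ) : V × ℝ →ₗ[ℝ] V × ℝ × ℝ :=
  LinearMap.prodMap LinearMap.id (LinearMap.toSpanSingleton ℝ (ℝ × ℝ) (t, 1 - t ^ 2))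

@[simp]
theorem arcEmbed_apply (t : ℝ) (q : V × ℝ) : arcEmbed V t q = (q.1, q.2 • (t, 1 - t ^ 2)) := rfl

theorem norm_le_two_mul_norm_arcEmbed (t : ℝ) (q : V × ℝ) : ‖q‖ ≤ 2 * ‖arcEmbed V t q‖ := by
  have hu := half_le_norm_parabola t
  rw [arcEmbed_apply, Prod.norm_def, Prod.norm_def, norm_smul]
  have h₂ : ‖q.2‖ ≤ 2 * (‖q.2‖ * ‖((t, 1 - t ^ 2) : ℝ × ℝ)‖) := by nlinarith [norm_nonneg q.2]
  exact max_le ((le_max_left _ _).trans (le_mul_of_one_le_left (by positivity) one_le_two))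
    (h₂.trans (mul_le_mul_of_nonneg_left (le_max_right _ _) zero_le_two))

theorem arcEmbed_injective (t : ℝ) : Injective (arcEmbed V t) := by
  refine (injective_iff_map_eq_zero _).2 fun q hq => norm_le_zero_iff.1 ?_
  simpa [hq] using norm_le_two_mul_norm_arcEmbed t q

theorem arcEmbed_zero_of_sq_eq_one {t : ℝ} (ht : t ^ 2 = 1) : arcEmbed V t (0, t) = (0, 1, 0) := by
  simp [← sq, ht]

theorem isCompact_setOf_isBestCoapprox_arcEmbed [FiniteDimensional ℝ V]
    {g : V × ℝ × ℝ → ℝ} (hg : IsGauge g) (y : V × ℝ × ℝ) :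
    IsCompact {p : ℝ × (V × ℝ) | p.1 ∈ Icc (-1) 1 ∧
      IsBestCoapprox g (range (arcEmbed V p.1)) y (arcEmbed V p.1 p.2)} := by
  obtain ⟨δ, hδ, hδg⟩ := hg.exists_pos_mul_norm_le
  refine Metric.isCompact_of_isClosed_isBounded ?_ <|
    ((Metric.isBounded_Icc (-1 : ℝ) 1).prod (Metric.isBounded_closedBall (x := 0)
      (r := 2 * g y / δ))).subset ?_
  · have hcont : ∀ r : V × ℝ,
        Continuous fun p : ℝ × (V × ℝ) => arcEmbed V p.1 p.2 - arcEmbed V p.1 r := by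
      intro r; simp only [arcEmbed_apply]; fun_prop
    have hC : {p : ℝ × (V × ℝ) | p.1 ∈ Icc (-1) 1 ∧
        IsBestCoapprox g (range (arcEmbed V p.1)) y (arcEmbed V p.1 p.2)} =
        Prod.fst ⁻¹' Icc (-1) 1 ∩ ⋂ r, {p | g (arcEmbed V p.1 p.2 - arcEmbed V p.1 r) ≤
          g (y - arcEmbed V p.1 r)} := by
      ext p
      simp only [IsBestCoapprox, mem_ofPred_eq, mem_inter_iff, mem_preimage, mem_iInter,
        forall_mem_range, mem_range_self, true_and]
    rw [hC]
    refine (isClosed_Icc.preimage continuous_fst).inter (isClosed_iInter fun r => isClosed_le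
      (hg.continuous.comp (hcont r)) (hg.continuous.comp ?_))
    simp only [arcEmbed_apply]; fun_prop
  · rintro ⟨t, q⟩ ⟨ht, hq⟩
    refine ⟨ht, ?_⟩
    rw [Metric.mem_closedBall, dist_zero_right, le_div_iff₀ hδ]
    have hgq := hq.le_of_zero_mem ⟨0, map_zero _⟩
    nlinarith [norm_le_two_mul_norm_arcEmbed t q, hδg (arcEmbed V t q)]

theorem exists_isBestCoapprox_of_snd_nonneg_of_nonpos {W E : Type*} [AddCommGroup W]
    [Module ℝ W] [AddCommGroup E] [Module ℝ E] {g : E → ℝ} (hg : ConvexOn ℝ univ g)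
    (ι : W × ℝ →ₗ[ℝ] E) {y : E} {q₁ q₂ : W × ℝ} (h₁ : IsBestCoapprox g (range ι) y (ι q₁))
    (h₂ : IsBestCoapprox g (range ι) y (ι q₂)) (hq₁ : 0 ≤ q₁.2) (hq₂ : q₂.2 ≤ 0) :
    ∃ a, IsBestCoapprox g (range ι) y (ι (a, 0)) := by
  have hconv : Convex ℝ (ι ⁻¹' {x | IsBestCoapprox g (range ι) y x}) := by
    refine (convex_setOf_isBestCoapprox hg ?_).linear_preimage ι
    rw [← LinearMap.coe_range]
    exact Submodule.convex _
  obtain ⟨q, hq, hq0⟩ := (convex_iff_ordConnected.1 (hconv.linear_image (LinearMap.snd ℝ W ℝ))).out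
    ⟨q₂, h₂, rfl⟩ ⟨q₁, h₁, rfl⟩ ⟨hq₂, hq₁⟩
  refine ⟨q.1, ?_⟩
  rwa [← show q = (q.1, 0) from Prod.ext rfl hq0]

theorem exists_isBestCoapprox_range_inl [FiniteDimensional ℝ V]
    {g : V × ℝ × ℝ → ℝ} (hg : IsGauge g)
    (h : ∀ t ∈ Ioo (-1 : ℝ) 1, ∃ x, IsBestCoapprox g (range (arcEmbed V t)) (0, 1, 0) x) :
    ∃ x, IsBestCoapprox g (range (LinearMap.inl ℝ V (ℝ × ℝ))) (0, 1, 0) x := by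
  have endpoint : ∀ t : ℝ, t ^ 2 = 1 →
      IsBestCoapprox g (range (arcEmbed V t)) (0, 1, 0) (arcEmbed V t (0, t)) := by
    intro t ht
    rw [arcEmbed_zero_of_sq_eq_one ht]
    exact isBestCoapprox_self ⟨(0, t), arcEmbed_zero_of_sq_eq_one ht⟩
  have hcover : Icc (-1 : ℝ) 1 ⊆ Prod.fst '' {p : ℝ × (V × ℝ) | p.1 ∈ Icc (-1) 1 ∧
      IsBestCoapprox g (range (arcEmbed V p.1)) (0, 1, 0) (arcEmbed V p.1 p.2)} := by
    intro t ht
    by_cases hIoo : t ∈ Ioo (-1 : ℝ) 1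
    · obtain ⟨x, hx⟩ := h t hIoo
      obtain ⟨q, rfl⟩ := hx.1
      exact ⟨(t, q), ⟨ht, hx⟩, rfl⟩
    · have ht' : t = -1 ∨ t = 1 := by
        by_contra! hne
        exact hIoo ⟨ht.1.lt_of_ne hne.1.symm, ht.2.lt_of_ne hne.2⟩
      have : t ^ 2 = 1 := by rcases ht' with rfl | rfl <;> norm_num
      exact ⟨(t, (0, t)), ⟨ht, endpoint t this⟩, rfl⟩
  obtain ⟨t, -, q₁, q₂, ⟨-, h₁⟩, ⟨-, h₂⟩, hq₁, hq₂⟩ :=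
    isPreconnected_Icc.exists_fiber_nonneg_nonpos (isCompact_setOf_isBestCoapprox_arcEmbed hg _)
      continuous_snd hcover (a := 1) (b := -1) (by norm_num) (by norm_num)
      ⟨(0, 1), ⟨by norm_num, endpoint 1 (by norm_num)⟩, zero_le_one⟩
      ⟨(0, -1), ⟨by norm_num, endpoint (-1) (by norm_num)⟩, by norm_num⟩
  obtain ⟨a, ha⟩ := exists_isBestCoapprox_of_snd_nonneg_of_nonpos hg.convexOn _ h₁ h₂ hq₁ hq₂
  rw [show arcEmbed V t (a, 0) = LinearMap.inl ℝ V (ℝ × ℝ) a by simp] at ha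
  refine ⟨_, ha.mono ?_ (mem_range_self a)⟩
  rintro _ ⟨b, rfl⟩
  exact ⟨(b, 0), by simp⟩

end ArcEmbed

theorem Submodule.exists_notMem_of_finrank_lt_rank {X : Type*} [AddCommGroup X] [Module ℝ X]
    (S : Submodule ℝ X) [FiniteDimensional ℝ S] (h : (finrank ℝ S : Cardinal) < Module.rank ℝ X) :
    ∃ v, v ∉ S := by
  refine SetLike.exists_not_mem_of_ne_top S (fun hS => h.ne ?_) rfl
  rw [Module.finrank_eq_rank, hS, rank_top]

theorem Submodule.exists_injective_coordinates {X : Type*} [AddCommGroup X] [Module ℝ X]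
    (K : Submodule ℝ X) [FiniteDimensional ℝ K]
    (hdim : ((finrank ℝ K + 1 : ℕ) : Cardinal) < Module.rank ℝ X) {y : X} (hyK : y ∉ K) :
    ∃ T : (Fin (finrank ℝ K) → ℝ) × ℝ × ℝ →ₗ[ℝ] X, Injective T ∧ T (0, 1, 0) = y ∧
      T '' range (LinearMap.inl ℝ _ (ℝ × ℝ)) = K := by
  let f := K.subtype ∘ₗ (Module.finBasis ℝ K).equivFun.symm.toLinearMap
  have hf : Injective f := K.injective_subtype.comp (LinearEquiv.injective _)
  have hfK : LinearMap.range f = K := by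
    rw [LinearMap.range_comp, LinearEquiv.range, Submodule.map_top, Submodule.range_subtype]
  obtain ⟨v, hv⟩ := (LinearMap.range (f.coprod (LinearMap.toSpanSingleton ℝ X y)))
    |>.exists_notMem_of_finrank_lt_rank <| lt_of_le_of_lt (by
      exact_mod_cast (LinearMap.finrank_range_le _).trans (by simp)) hdim
  let T := ((f.coprod (LinearMap.toSpanSingleton ℝ X y)).coprod
    (LinearMap.toSpanSingleton ℝ X v)) ∘ₗ (LinearEquiv.prodAssoc ℝ _ ℝ ℝ).symm.toLinearMap
  have hT_apply : ∀ a p q, T (a, p, q) = f a + p • y + q • v := fun _ _ _ => rfl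
  have hTf : T ∘ₗ LinearMap.inl ℝ _ (ℝ × ℝ) = f :=
    LinearMap.ext fun a => (hT_apply a 0 0).trans (by simp)
  refine ⟨T, ?_, by simp [hT_apply], ?_⟩
  · exact (LinearMap.injective_coprod_toSpanSingleton (LinearMap.injective_coprod_toSpanSingleton
      hf (by rwa [hfK])) hv).comp (LinearEquiv.injective _)
  · rw [← range_comp, ← LinearMap.coe_comp, ← LinearMap.coe_range, hTf, hfK]

theorem Submodule.coproximinal_of_finrank_succ {X : Type*} [AddCommGroup X] [Module ℝ X]
    {γ : X → ℝ} (hγ : IsGauge γ) (K : Submodule ℝ X) [FiniteDimensional ℝ K]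
    (hdim : ((finrank ℝ K + 1 : ℕ) : Cardinal) < Module.rank ℝ X)
    (h : ∀ L : Submodule ℝ X, FiniteDimensional ℝ L → finrank ℝ L = finrank ℝ K + 1 →
      Coproximinal γ L) :
    Coproximinal γ K := by
  intro y
  by_cases hyK : y ∈ K
  · exact ⟨y, isBestCoapprox_self hyK⟩
  obtain ⟨T, hT, hTy, hTK⟩ := K.exists_injective_coordinates hdim hyK
  have hcoap : ∀ t ∈ Ioo (-1 : ℝ) 1,
      ∃ x, IsBestCoapprox (γ ∘ T) (range (arcEmbed _ t)) (0, 1, 0) x := by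
    intro t _
    have hL : finrank ℝ (LinearMap.range (T ∘ₗ arcEmbed _ t)) = finrank ℝ K + 1 := by
      rw [LinearMap.finrank_range_of_inj (by
        rw [LinearMap.coe_comp]; exact hT.comp (arcEmbed_injective t))]
      simp
    obtain ⟨x, hx⟩ := h _ inferInstance hL y
    rw [LinearMap.coe_range, LinearMap.coe_comp, range_comp] at hx
    obtain ⟨x, -, rfl⟩ := hx.1
    exact ⟨x, (isBestCoapprox_image_iff hT).1 (hTy ▸ hx)⟩
  obtain ⟨x, hx⟩ := exists_isBestCoapprox_range_inl (hγ.comp_linearMap hT) hcoap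
  refine ⟨T x, ?_⟩
  rw [← hTK, ← hTy]
  exact (isBestCoapprox_image_iff hT).2 hx

theorem stmt_13 {X : Type*} [AddCommGroup X] [Module ℝ X]
    (γ : X → ℝ) (hγ : IsGauge γ) (m n : ℕ) (hmn : m ≤ n)
    (hdim : (n : Cardinal) < Module.rank ℝ X)
    (h : ∀ K : Submodule ℝ X, FiniteDimensional ℝ K → Module.finrank ℝ K = n →
      Coproximinal γ (K : Set X)) :
    ∀ K : Submodule ℝ X, FiniteDimensional ℝ K → Module.finrank ℝ K = m →
      Coproximinal γ (K : Set X) := by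
  refine Nat.decreasingInduction (motive := fun k _ => ∀ K : Submodule ℝ X,
    FiniteDimensional ℝ K → finrank ℝ K = k → Coproximinal γ (K : Set X)) ?_ h hmn
  intro k hk ih K _ hKk
  subst hKk
  exact K.coproximinal_of_finrank_succ hγ (lt_of_le_of_lt (by exact_mod_cast hk) hdim) ih
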